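/- arXiv:1907.06271 — 2 statements merged into one kernel-verified Lean document; each statement's English description precedes it below -/
import Mathlib

section
/- Let (X,d) be a δ-hyperbolic geodesic metric space and let A ≥ 0. If x, y, z, w ∈ X are such that (x,z)_y ≤ A, (y,w)_z ≤ A, and d(y,z) > 10δ + 2A, then for any geodesic segments [x,y], [y,z], [z,w] the concatenated path [x,y] ∪ [y,z] ∪ [z,w] is a (1, 4δ + 4A)-quasigeodesic; explicitly, for any two points p, q on the concatenation, the length of the subpath of the concatenation between p and q is at most d(p,q) + 4δ + 4A. -/
open Set

/-- The Gromov product of `x` and `y` relative to `z`: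
`(x,y)_z = ½(d(x,z) + d(y,z) − d(x,y))`. -/
noncomputable def gprod {X : Type*} [MetricSpace X] (x y z : X) : ℝ :=
  (dist x z + dist y z - dist x y) / 2

/-- `f` parametrizes a geodesic segment from `x` to `y` by arc length on `[0, dist x y]`. -/
def IsGeodSeg {X : Type*} [MetricSpace X] (f : ℝ → X) (x y : X) : Prop :=
  f 0 = x ∧ f (dist x y) = y ∧
    ∀ s ∈ Set.Icc (0 : ℝ) (dist x y), ∀ t ∈ Set.Icc (0 : ℝ) (dist x y),
      dist (f s) (f t) = |s - t|

/-- `X` is a geodesic metric space: any two points are joined by a geodesic segment. -/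
def GeodMetricSpace (X : Type*) [MetricSpace X] : Prop :=
  ∀ x y : X, ∃ f : ℝ → X, IsGeodSeg f x y

/-- `X` is `δ`-hyperbolic: for any `x, y, z`, any geodesics `[z,x]` and `[z,y]`, and any
points `x' ∈ [z,x]`, `y' ∈ [z,y]` with `d(z,x') = d(z,y') = s ≤ (x,y)_z`, one has
`d(x',y') ≤ δ`. -/
def DeltaHyp (X : Type*) [MetricSpace X] (δ : ℝ) : Prop :=
  ∀ (x y z : X) (f g : ℝ → X), IsGeodSeg f z x → IsGeodSeg g z y →
    ∀ s : ℝ, 0 ≤ s → s ≤ dist z x → s ≤ dist z y → s ≤ gprod x y z →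
      dist (f s) (g s) ≤ δ

/-! Points on one segment are as far apart as their parameters. For adjacent segments the
small Gromov product at the common corner costs `2A`, by the triangle inequality alone:
a Gromov product at the origin of a geodesic only grows when a point on it is replaced by
the endpoint. For the two outer segments, the corner at `z` puts any `q ∈ [z,w]` almost in
the direction of `z` as seen from `y`; as `[y,z]` is long, the four-point inequality
`min ((x,q)_y, (q,z)_y) ≤ (x,z)_y + δ` (two thin triangles on a geodesic `[y,q]`) then forces
`(x,q)_y ≤ A + δ`, and the loss is `4A + 2δ`. -/

section

variable {X : Type*} [MetricSpace X] {f g h : ℝ → X} {o x y z w : X}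

namespace IsGeodSeg

theorem dist_apply_apply (hf : IsGeodSeg f o x) {s t : ℝ} (hs : 0 ≤ s) (hst : s ≤ t)
    (ht : t ≤ dist o x) : dist (f s) (f t) = t - s := by
  rw [hf.2.2 s ⟨hs, hst.trans ht⟩ t ⟨hs.trans hst, ht⟩, abs_sub_comm,
    abs_of_nonneg (sub_nonneg.2 hst)]

theorem dist_start_apply (hf : IsGeodSeg f o x) {r : ℝ} (h0 : 0 ≤ r) (h1 : r ≤ dist o x) :
    dist o (f r) = r := by
  simpa [hf.1] using hf.dist_apply_apply le_rfl h0 h1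

theorem dist_apply_end (hf : IsGeodSeg f o x) {r : ℝ} (h0 : 0 ≤ r) (h1 : r ≤ dist o x) :
    dist (f r) x = dist o x - r := by
  simpa [hf.2.1] using hf.dist_apply_apply h0 h1 le_rfl

theorem reverse (hf : IsGeodSeg f o x) : IsGeodSeg (fun τ => f (dist o x - τ)) x o := by
  refine ⟨by simp [hf.2.1], by simp [dist_comm x o, hf.1], fun s hs t ht => ?_⟩
  rw [dist_comm x o] at hs ht
  rw [hf.2.2 _ ⟨by linarith [hs.2], by linarith [hs.1]⟩ _
    ⟨by linarith [ht.2], by linarith [ht.1]⟩, sub_sub_sub_cancel_left, abs_sub_comm]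

end IsGeodSeg

theorem gprod_comm (x y o : X) : gprod x y o = gprod y x o := by
  unfold gprod; rw [dist_comm x y]; ring

theorem gprod_nonneg (x y o : X) : 0 ≤ gprod x y o := by
  unfold gprod; linarith [dist_triangle_right x y o]

theorem gprod_le_dist_left (x y o : X) : gprod x y o ≤ dist x o := by
  unfold gprod; linarith [dist_triangle_left y o x]

theorem gprod_le_dist_right (x y o : X) : gprod x y o ≤ dist y o :=
  gprod_comm x y o ▸ gprod_le_dist_left y x o

theorem IsGeodSeg.two_mul_gprod_apply (hf : IsGeodSeg f o x) (q : X) {r : ℝ} (h0 : 0 ≤ r)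
    (h1 : r ≤ dist o x) : 2 * gprod (f r) q o = r + dist q o - dist (f r) q := by
  unfold gprod; rw [dist_comm (f r) o, hf.dist_start_apply h0 h1]; ring

theorem IsGeodSeg.gprod_apply_le (hf : IsGeodSeg f o x) (q : X) {r : ℝ} (h0 : 0 ≤ r)
    (h1 : r ≤ dist o x) : gprod (f r) q o ≤ gprod x q o := by
  have h := hf.two_mul_gprod_apply q h0 h1
  have hx := hf.dist_apply_end h0 h1
  unfold gprod at h ⊢
  linarith [dist_triangle x (f r) q, dist_comm x (f r), dist_comm x o]

theorem IsGeodSeg.add_le_dist_add_two_mul_gprod (hf : IsGeodSeg f o x) (hg : IsGeodSeg g o y)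
    {r u : ℝ} (hr0 : 0 ≤ r) (hr1 : r ≤ dist o x) (hu0 : 0 ≤ u) (hu1 : u ≤ dist o y) :
    r + u ≤ dist (f r) (g u) + 2 * gprod x y o := by
  have hfg := hf.gprod_apply_le (g u) hr0 hr1
  have hgx := hg.gprod_apply_le x hu0 hu1
  rw [gprod_comm (g u), gprod_comm y] at hgx
  have h := hf.two_mul_gprod_apply (g u) hr0 hr1
  rw [dist_comm (g u) o, hg.dist_start_apply hu0 hu1] at h
  linarith

theorem IsGeodSeg.sub_half_dist_le_gprod (hf : IsGeodSeg f o x) (hg : IsGeodSeg g o y)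
    {s : ℝ} (h0 : 0 ≤ s) (hx : s ≤ dist o x) (hy : s ≤ dist o y) :
    s - dist (f s) (g s) / 2 ≤ gprod x y o := by
  have hfx := hf.dist_apply_end h0 hx
  have hgy := hg.dist_apply_end h0 hy
  unfold gprod
  linarith [dist_triangle4 x (f s) (g s) y, dist_comm x (f s), dist_comm x o, dist_comm y o]

theorem DeltaHyp.min_gprod_le {δ : ℝ} (hhyp : DeltaHyp X δ) (hgeo : GeodMetricSpace X)
    (x y q o : X) : min (gprod x q o) (gprod q y o) ≤ gprod x y o + δ := by
  obtain ⟨f, hf⟩ := hgeo o x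
  obtain ⟨g, hg⟩ := hgeo o y
  obtain ⟨k, hk⟩ := hgeo o q
  set s := min (gprod x q o) (gprod q y o)
  have hs0 : 0 ≤ s := le_min (gprod_nonneg x q o) (gprod_nonneg q y o)
  have hsx : s ≤ dist o x := dist_comm x o ▸ (min_le_left _ _).trans (gprod_le_dist_left x q o)
  have hsq : s ≤ dist o q := dist_comm q o ▸ (min_le_left _ _).trans (gprod_le_dist_right x q o)
  have hsy : s ≤ dist o y :=
    dist_comm y o ▸ (min_le_right _ _).trans (gprod_le_dist_right q y o)
  have hfk := hhyp x q o f k hf hk s hs0 hsx hsq (min_le_left _ _)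
  have hkg := hhyp q y o k g hk hg s hs0 hsq hsy (min_le_right _ _)
  linarith [hf.sub_half_dist_le_gprod hg hs0 hsx hsy, dist_triangle (f s) (k s) (g s)]

theorem IsGeodSeg.sub_add_le_dist_add_two_mul_gprod (hf : IsGeodSeg f x y)
    (hg : IsGeodSeg g y z) {s u : ℝ} (hs0 : 0 ≤ s) (hs1 : s ≤ dist x y) (hu0 : 0 ≤ u)
    (hu1 : u ≤ dist y z) : dist x y - s + u ≤ dist (f s) (g u) + 2 * gprod x z y := by
  have h := hf.reverse.add_le_dist_add_two_mul_gprod hg (r := dist x y - s) (by linarith)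
    (by rw [dist_comm y x]; linarith) hu0 hu1
  simpa only [sub_sub_cancel] using h

theorem DeltaHyp.sub_add_add_le_dist_add {δ A : ℝ} (hhyp : DeltaHyp X δ)
    (hgeo : GeodMetricSpace X) (hf : IsGeodSeg f x y) (hh : IsGeodSeg h z w)
    (hxz : gprod x z y ≤ A) (hyw : gprod y w z ≤ A) (hyz : δ + 2 * A < dist y z)
    {s τ : ℝ} (hs0 : 0 ≤ s) (hs1 : s ≤ dist x y) (hτ0 : 0 ≤ τ) (hτ1 : τ ≤ dist z w) :
    dist x y - s + dist y z + τ ≤ dist (f s) (h τ) + (4 * A + 2 * δ) := by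
  set q := h τ
  have hqy : gprod q y z ≤ A := (hh.gprod_apply_le y hτ0 hτ1).trans (gprod_comm y w z ▸ hyw)
  have hqz : dist y z - A ≤ gprod q z y := by
    have h2 := hh.two_mul_gprod_apply y hτ0 hτ1
    unfold gprod
    linarith [hh.dist_start_apply hτ0 hτ1, dist_comm q z, dist_comm z y, dist_comm y q]
  -- `(q,z)_y` is too large to be the smaller term of the four-point inequality at `y`
  have hxq : gprod x q y ≤ A + δ := by
    have h4 : min (gprod x q y) (gprod q z y) ≤ A + δ := by
      linarith [hhyp.min_gprod_le hgeo x z q y]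
    exact (min_le_iff.1 h4).resolve_right (not_le.2 (by linarith))
  have hp := hf.reverse.gprod_apply_le q (r := dist x y - s) (by linarith)
    (by rw [dist_comm y x]; linarith)
  have h2p := hf.reverse.two_mul_gprod_apply q (r := dist x y - s) (by linarith)
    (by rw [dist_comm y x]; linarith)
  simp only [sub_sub_cancel] at hp h2p
  have h2q := hh.two_mul_gprod_apply y hτ0 hτ1
  linarith [dist_comm q y]

end

/-- Let `(X,d)` be a `δ`-hyperbolic geodesic metric space and `A ≥ 0`.
If `x, y, z, w ∈ X` satisfy `(x,z)_y ≤ A`, `(y,w)_z ≤ A`, and `d(y,z) > 10δ + 2A`, then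
for any geodesic segments `[x,y]`, `[y,z]`, `[z,w]` the arc-length parametrized
concatenation `c` of `[x,y] ∪ [y,z] ∪ [z,w]` is a `(1, 4δ + 4A)`-quasigeodesic: for any
two parameters `s, t`, the length `|s − t|` of the subpath between `c s` and `c t` is at
most `d(c s, c t) + 4δ + 4A`. -/
theorem stmt2 {X : Type*} [MetricSpace X] (δ A : ℝ) (hδ : 0 ≤ δ) (hA : 0 ≤ A)
    (hgeo : GeodMetricSpace X) (hhyp : DeltaHyp X δ)
    (x y z w : X) (f g h : ℝ → X)
    (hf : IsGeodSeg f x y) (hg : IsGeodSeg g y z) (hh : IsGeodSeg h z w)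
    (hxz : gprod x z y ≤ A) (hyw : gprod y w z ≤ A)
    (hyz : dist y z > 10 * δ + 2 * A)
    (c : ℝ → X)
    (hc : ∀ s : ℝ, c s =
      if s ≤ dist x y then f s
      else if s ≤ dist x y + dist y z then g (s - dist x y)
      else h (s - dist x y - dist y z)) :
    ∀ s ∈ Set.Icc (0 : ℝ) (dist x y + dist y z + dist z w),
    ∀ t ∈ Set.Icc (0 : ℝ) (dist x y + dist y z + dist z w),
      |s - t| ≤ dist (c s) (c t) + (4 * δ + 4 * A) := by
  intro s hs t ht
  wlog hst : s ≤ t generalizing s t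
  · rw [abs_sub_comm, dist_comm]
    exact this t ht s hs (le_of_not_ge hst)
  rw [abs_sub_comm, abs_of_nonneg (sub_nonneg.2 hst), hc s, hc t]
  obtain ⟨hs0, -⟩ := hs
  obtain ⟨-, ht1⟩ := ht
  have hyz' : δ + 2 * A < dist y z := by linarith
  split_ifs with hsx htx
  · linarith [hf.dist_apply_apply hs0 hst htx]
  · linarith [hf.sub_add_le_dist_add_two_mul_gprod hg hs0 hsx (u := t - dist x y)
      (by linarith) (by linarith)]
  · linarith [hhyp.sub_add_add_le_dist_add hgeo hf hh hxz hyw hyz' hs0 hsx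
      (τ := t - dist x y - dist y z) (by linarith) (by linarith)]
  · linarith
  · linarith [hg.dist_apply_apply (s := s - dist x y) (t := t - dist x y) (by linarith)
      (by linarith) (by linarith)]
  · linarith [hg.sub_add_le_dist_add_two_mul_gprod hh (s := s - dist x y)
      (u := t - dist x y - dist y z) (by linarith) (by linarith) (by linarith) (by linarith)]
  · linarith
  · linarith
  · linarith [hh.dist_apply_apply (s := s - dist x y - dist y z) (t := t - dist x y - dist y z)
      (by linarith) (by linarith) (by linarith)]
end

section
/- Let (X,d) be a δ-hyperbolic geodesic metric space and let x, y, z, w ∈ X. If there exist geodesic segments [x,w] and [y,z] and points a ∈ [x,w], b ∈ [y,z] with d(a,b) ≤ 2δ, then for any geodesic segments [x,y], [y,z], [z,w] the concatenated path [x,y] ∪ [y,z] ∪ [z,w] is a (1, 4δ + 4·d(y,z))-quasigeodesic; explicitly, for any two points p, q on the concatenation, the length of the subpath of the concatenation between p and q is at most d(p,q) + 4δ + 4·d(y,z). -/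
open Set

/-! The hypothesis on `[x,w]` and `[y,z]` forces the concatenation to be almost as short as
`[x,w]`: its length `d(x,y) + d(y,z) + d(z,w)` exceeds `d(x,w)` by at most
`2·d(y,z) + 2·d(a,b)` (triangle inequalities through `a` and `b`). A path `c` on `[0, L]`
with `d(x, c s) ≤ s` and `d(c s, w) ≤ L - s`, such as the concatenation, is then a
`(1, L - d(x,w))`-quasigeodesic, by the triangle inequality `d(x,w) ≤ d(x, c s) + d(c s, c t) +
d(c t, w)`. -/

section GeodesicSegments

variable {X : Type*} [MetricSpace X]

namespace IsGeodSeg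

variable {f : ℝ → X} {x y : X} {s : ℝ}

lemma dist_left (hf : IsGeodSeg f x y) (hs : s ∈ Icc 0 (dist x y)) : dist x (f s) = s := by
  have := hf.2.2 0 ⟨le_rfl, dist_nonneg⟩ s hs
  rwa [hf.1, zero_sub, abs_neg, abs_of_nonneg hs.1] at this

lemma dist_right (hf : IsGeodSeg f x y) (hs : s ∈ Icc 0 (dist x y)) :
    dist (f s) y = dist x y - s := by
  have := hf.2.2 s hs (dist x y) ⟨dist_nonneg, le_rfl⟩
  rwa [hf.2.1, abs_of_nonpos (sub_nonpos.2 hs.2), neg_sub] at this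

lemma dist_add_dist (hf : IsGeodSeg f x y) (hs : s ∈ Icc 0 (dist x y)) :
    dist x (f s) + dist (f s) y = dist x y := by
  rw [hf.dist_left hs, hf.dist_right hs, add_sub_cancel]

lemma dist_le_dist_left_add (hf : IsGeodSeg f x y) (hs : s ∈ Icc 0 (dist x y)) (p : X) :
    dist p (f s) ≤ dist p x + s :=
  (dist_triangle p x (f s)).trans_eq (by rw [hf.dist_left hs])

lemma dist_le_dist_right_add (hf : IsGeodSeg f x y) (hs : s ∈ Icc 0 (dist x y)) (p : X) :
    dist (f s) p ≤ dist x y - s + dist y p :=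
  (dist_triangle (f s) y p).trans_eq (by rw [hf.dist_right hs])

end IsGeodSeg

lemma dist_add_dist_le_of_dist_add_dist_eq {x y z w a b : X}
    (ha : dist x a + dist a w = dist x w) (hb : dist y b + dist b z = dist y z) :
    dist x y + dist z w ≤ dist x w + dist y z + 2 * dist a b := by
  linarith [dist_triangle4 x a b y, dist_triangle4 z b a w, dist_comm a b, dist_comm b y,
    dist_comm z b]

lemma abs_sub_le_dist_add_length_sub_dist {c : ℝ → X} {x w : X} {L : ℝ}
    (hstart : ∀ s ∈ Icc 0 L, dist x (c s) ≤ s) (hend : ∀ s ∈ Icc 0 L, dist (c s) w ≤ L - s)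
    {s t : ℝ} (hs : s ∈ Icc 0 L) (ht : t ∈ Icc 0 L) :
    |s - t| ≤ dist (c s) (c t) + (L - dist x w) := by
  rw [abs_sub_le_iff]
  constructor
  · linarith [dist_triangle4 x (c t) (c s) w, hstart t ht, hend s hs, dist_comm (c s) (c t)]
  · linarith [dist_triangle4 x (c s) (c t) w, hstart s hs, hend t ht]

section Concat

variable {f g h c : ℝ → X} {x y z w : X}

lemma dist_start_le_of_concat (hf : IsGeodSeg f x y) (hg : IsGeodSeg g y z)
    (hh : IsGeodSeg h z w)
    (hc : ∀ s : ℝ, c s =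
      if s ≤ dist x y then f s
      else if s ≤ dist x y + dist y z then g (s - dist x y)
      else h (s - dist x y - dist y z))
    {s : ℝ} (hs : s ∈ Icc 0 (dist x y + dist y z + dist z w)) : dist x (c s) ≤ s := by
  rw [hc s]
  split_ifs with h₁ h₂
  · exact (hf.dist_left ⟨hs.1, h₁⟩).le
  · linarith [hg.dist_le_dist_left_add (s := s - dist x y) ⟨by linarith, by linarith⟩ x]
  · linarith [hh.dist_le_dist_left_add (s := s - dist x y - dist y z)
      ⟨by linarith, by linarith [hs.2]⟩ x, dist_triangle x y z]

lemma dist_end_le_of_concat (hf : IsGeodSeg f x y) (hg : IsGeodSeg g y z)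
    (hh : IsGeodSeg h z w)
    (hc : ∀ s : ℝ, c s =
      if s ≤ dist x y then f s
      else if s ≤ dist x y + dist y z then g (s - dist x y)
      else h (s - dist x y - dist y z))
    {s : ℝ} (hs : s ∈ Icc 0 (dist x y + dist y z + dist z w)) :
    dist (c s) w ≤ dist x y + dist y z + dist z w - s := by
  rw [hc s]
  split_ifs with h₁ h₂
  · linarith [hf.dist_le_dist_right_add ⟨hs.1, h₁⟩ w, dist_triangle y z w]
  · linarith [hg.dist_le_dist_right_add (s := s - dist x y) ⟨by linarith, by linarith⟩ w]
  · linarith [(hh.dist_right (s := s - dist x y - dist y z)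
      ⟨by linarith, by linarith [hs.2]⟩).le]

end Concat

end GeodesicSegments

theorem stmt3_general {X : Type*} [MetricSpace X] (δ : ℝ)
    (x y z w : X)
    (hex : ∃ f₄ f₂ : ℝ → X, IsGeodSeg f₄ x w ∧ IsGeodSeg f₂ y z ∧
      ∃ a ∈ f₄ '' Set.Icc (0 : ℝ) (dist x w), ∃ b ∈ f₂ '' Set.Icc (0 : ℝ) (dist y z),
        dist a b ≤ 2 * δ)
    (f g h : ℝ → X)
    (hf : IsGeodSeg f x y) (hg : IsGeodSeg g y z) (hh : IsGeodSeg h z w)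
    (c : ℝ → X)
    (hc : ∀ s : ℝ, c s =
      if s ≤ dist x y then f s
      else if s ≤ dist x y + dist y z then g (s - dist x y)
      else h (s - dist x y - dist y z)) :
    ∀ s ∈ Set.Icc (0 : ℝ) (dist x y + dist y z + dist z w),
    ∀ t ∈ Set.Icc (0 : ℝ) (dist x y + dist y z + dist z w),
      |s - t| ≤ dist (c s) (c t) + (4 * δ + 4 * dist y z) := by
  obtain ⟨f₄, f₂, hf₄, hf₂, _, ⟨α, hα, rfl⟩, _, ⟨β, hβ, rfl⟩, hab⟩ := hex
  have hexcess :=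
    dist_add_dist_le_of_dist_add_dist_eq (hf₄.dist_add_dist hα) (hf₂.dist_add_dist hβ)
  intro s hs t ht
  have hquasi := abs_sub_le_dist_add_length_sub_dist
    (fun _ hr ↦ dist_start_le_of_concat hf hg hh hc hr)
    (fun _ hr ↦ dist_end_le_of_concat hf hg hh hc hr) hs ht
  linarith [dist_nonneg (x := y) (y := z)]

/-- Let `(X,d)` be a `δ`-hyperbolic geodesic metric space and
`x, y, z, w ∈ X`. If there exist geodesic segments `[x,w]` and `[y,z]` and points
`a ∈ [x,w]`, `b ∈ [y,z]` with `d(a,b) ≤ 2δ`, then for any geodesic segments `[x,y]`,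
`[y,z]`, `[z,w]` the arc-length parametrized concatenation `c` of
`[x,y] ∪ [y,z] ∪ [z,w]` is a `(1, 4δ + 4·d(y,z))`-quasigeodesic: for any two parameters
`s, t`, the length `|s − t|` of the subpath between `c s` and `c t` is at most
`d(c s, c t) + 4δ + 4·d(y,z)`. -/
theorem stmt3 {X : Type*} [MetricSpace X] (δ : ℝ) (hδ : 0 ≤ δ)
    (hgeo : GeodMetricSpace X) (hhyp : DeltaHyp X δ)
    (x y z w : X)
    (hex : ∃ f₄ f₂ : ℝ → X, IsGeodSeg f₄ x w ∧ IsGeodSeg f₂ y z ∧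
      ∃ a ∈ f₄ '' Set.Icc (0 : ℝ) (dist x w), ∃ b ∈ f₂ '' Set.Icc (0 : ℝ) (dist y z),
        dist a b ≤ 2 * δ)
    (f g h : ℝ → X)
    (hf : IsGeodSeg f x y) (hg : IsGeodSeg g y z) (hh : IsGeodSeg h z w)
    (c : ℝ → X)
    (hc : ∀ s : ℝ, c s =
      if s ≤ dist x y then f s
      else if s ≤ dist x y + dist y z then g (s - dist x y)
      else h (s - dist x y - dist y z)) :
    ∀ s ∈ Set.Icc (0 : ℝ) (dist x y + dist y z + dist z w),
    ∀ t ∈ Set.Icc (0 : ℝ) (dist x y + dist y z + dist z w),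
      |s - t| ≤ dist (c s) (c t) + (4 * δ + 4 * dist y z) :=
  stmt3_general δ x y z w hex f g h hf hg hh c hc
end
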